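/- arXiv:2311.18515 — 2 statements merged into one kernel-verified Lean document; each statement's English description precedes it below -/
import Mathlib

section
/- Let K be a totally real number field with ring of integers 𝒪 and totally positive integers 𝒪⁺. Let 𝔞 be a nonzero ideal of 𝒪, let d be a positive rational integer with d ∈ 𝔞, and set S = 𝒪⁺ ∖ ⋃_{j≥0} (𝔞·(d^j) ∖ (d^{j+1})). Then for every δ ∈ 𝒪⁺, the number of partitions of δ with parts in 𝒪⁺ ∖ 𝔞 equals the number of partitions of δ with parts in S in which each part appears at most d − 1 times. -/
/-!
Every element `s` of `S` factors uniquely as `d ^ j • x` with `x ∈ 𝒪⁺ ∖ 𝔞`: take the largest power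
of `d` dividing `s` (`d` is not a unit); the cofactor is totally positive because `s` is, and it
lies outside `𝔞` exactly because `s` avoids every `𝔞·(dʲ) ∖ (d^{j+1})`. Granted this, the theorem
is Glaisher's bijection: a part `x` occurring `n = ∑ cⱼ dʲ` times (in base `d`) is replaced by the
parts `dʲ • x`, each occurring `cⱼ` times; conversely a part `dʲ • x` is broken into `dʲ` copies
of `x`.
-/

open scoped Classical

open NumberField

/-- `x ∈ 𝓞 K` is totally positive if every real embedding of `K` sends it to a
positive real number. -/
def IsTotallyPositive (K : Type*) [Field K] [NumberField K] (x : 𝓞 K) : Prop :=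
  ∀ φ : K →+* ℝ, 0 < φ (x : K)

namespace Nat

theorem sum_range_div_pow_mod_mul_pow (d n N : ℕ) :
    ∑ j ∈ Finset.range N, n / d ^ j % d * d ^ j = n % d ^ N := by
  induction N with
  | zero => simp [Nat.mod_one]
  | succ N ih => rw [Finset.sum_range_succ, ih, Nat.mod_pow_succ, mul_comm]

theorem sum_range_mul_pow_div_pow_mod {d : ℕ} {c : ℕ → ℕ} (hc : ∀ j, c j < d) (N J : ℕ) :
    (∑ j ∈ Finset.range N, c j * d ^ j) / d ^ J % d = if J < N then c J else 0 := by
  induction N generalizing c J with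
  | zero => simp
  | succ N ih =>
    have hd : 0 < d := (c 0).zero_le.trans_lt (hc 0)
    have hsum : ∑ j ∈ Finset.range (N + 1), c j * d ^ j
        = c 0 + d * ∑ j ∈ Finset.range N, c (j + 1) * d ^ j := by
      rw [Finset.sum_range_succ', Finset.mul_sum, add_comm]
      simp only [pow_succ, pow_zero, mul_one]
      exact congrArg (c 0 + ·) (Finset.sum_congr rfl fun j _ => by ring)
    rw [hsum]
    cases J with
    | zero => simp [Nat.mod_eq_of_lt (hc 0)]
    | succ J =>
      rw [pow_succ', ← Nat.div_div_eq_div_mul, Nat.add_mul_div_left _ _ hd,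
        Nat.div_eq_of_lt (hc 0), zero_add, ih fun j => hc (j + 1)]
      simp

end Nat

namespace Glaisher

open Multiset Set

variable {M : Type*} [AddCommMonoid M] {d : ℕ} {T S : Set M}

def scale (d : ℕ) (p : ℕ × M) : M := d ^ p.1 • p.2

noncomputable def factor (d : ℕ) (T : Set M) : M → ℕ × M :=
  Function.invFunOn (scale d) (univ ×ˢ T)

theorem factor_mem (hbij : BijOn (scale d) (univ ×ˢ T) S) {s : M} (hs : s ∈ S) :
    (factor d T s).2 ∈ T :=
  (Function.invFunOn_mem (hbij.surjOn hs)).2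

theorem pow_smul_factor (hbij : BijOn (scale d) (univ ×ˢ T) S) {s : M} (hs : s ∈ S) :
    d ^ (factor d T s).1 • (factor d T s).2 = s :=
  Function.invFunOn_eq (hbij.surjOn hs)

theorem factor_pow_smul (hbij : BijOn (scale d) (univ ×ˢ T) S) {x : M} (hx : x ∈ T) (j : ℕ) :
    factor d T (d ^ j • x) = (j, x) :=
  hbij.invOn_invFunOn.1 (show (j, x) ∈ univ ×ˢ T from ⟨trivial, hx⟩)

theorem pow_smul_eq_pow_smul_iff (hinj : InjOn (scale d) (univ ×ˢ T)) {x y : M} (hx : x ∈ T)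
    (hy : y ∈ T) {i j : ℕ} : d ^ i • x = d ^ j • y ↔ i = j ∧ x = y :=
  (hinj.eq_iff (x := (i, x)) (y := (j, y)) ⟨trivial, hx⟩ ⟨trivial, hy⟩).trans Prod.ext_iff

noncomputable def merge (d : ℕ) (T : Set M) (m : Multiset M) : Multiset M :=
  m.bind fun s => replicate (d ^ (factor d T s).1) (factor d T s).2

theorem mem_merge (hbij : BijOn (scale d) (univ ×ˢ T) S) {m : Multiset M} (hm : ∀ s ∈ m, s ∈ S)
    {y : M} (hy : y ∈ merge d T m) : y ∈ T := by
  obtain ⟨s, hs, hy⟩ := mem_bind.1 hy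
  exact eq_of_mem_replicate hy ▸ factor_mem hbij (hm s hs)

theorem sum_merge (hbij : BijOn (scale d) (univ ×ˢ T) S) {m : Multiset M} (hm : ∀ s ∈ m, s ∈ S) :
    (merge d T m).sum = m.sum := by
  rw [merge, sum_bind]
  conv_rhs => rw [← map_id' m]
  exact congrArg Multiset.sum <| map_congr rfl fun s hs => by
    rw [sum_replicate, pow_smul_factor hbij (hm s hs)]

variable [DecidableEq M]

theorem count_merge (hbij : BijOn (scale d) (univ ×ˢ T) S) {m : Multiset M}
    (hm : ∀ s ∈ m, s ∈ S) {μ : M} (hμ : μ ∈ T) {N : ℕ} (hN : ∀ s ∈ m, (factor d T s).1 < N) :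
    (merge d T m).count μ = ∑ j ∈ Finset.range N, m.count (d ^ j • μ) * d ^ j := by
  induction m using Multiset.induction_on with
  | empty => simp [merge]
  | cons s m ih =>
    have hs := hm s (mem_cons_self s m)
    have hcond (j : ℕ) : d ^ j • μ = s ↔ j = (factor d T s).1 ∧ μ = (factor d T s).2 := by
      conv_lhs => rw [← pow_smul_factor hbij hs]
      exact pow_smul_eq_pow_smul_iff hbij.injOn hμ (factor_mem hbij hs)
    rw [merge, cons_bind, count_add, ← merge, ih (fun t ht => hm t (mem_cons_of_mem ht))
      (fun t ht => hN t (mem_cons_of_mem ht))]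
    simp only [count_cons, add_mul, Finset.sum_add_distrib, hcond, ite_and, count_replicate]
    simp [Finset.sum_ite_eq', hN s (mem_cons_self s m), eq_comm, add_comm]

-- Every multiplicity is at most `card m < d ^ card m`, so base-`d` digits from position `card m`
-- on vanish.
def split (d : ℕ) (m : Multiset M) : Multiset M :=
  ∑ x ∈ m.toFinset, ∑ j ∈ Finset.range (card m), (m.count x / d ^ j % d) • {d ^ j • x}

theorem exists_of_mem_split {m : Multiset M} {y : M} (hy : y ∈ split d m) :
    ∃ j < card m, ∃ x ∈ m, d ^ j • x = y := by
  simp only [split, mem_sum, Multiset.nsmul_singleton] at hy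
  obtain ⟨x, hx, j, hj, hy⟩ := hy
  exact ⟨j, Finset.mem_range.1 hj, x, mem_toFinset.1 hx, (eq_of_mem_replicate hy).symm⟩

theorem mem_of_mem_split (hmaps : MapsTo (scale d) (univ ×ˢ T) S) {m : Multiset M}
    (hm : ∀ x ∈ m, x ∈ T) {y : M} (hy : y ∈ split d m) : y ∈ S := by
  obtain ⟨j, -, x, hx, rfl⟩ := exists_of_mem_split hy
  exact hmaps (show (j, x) ∈ univ ×ˢ T from ⟨trivial, hm x hx⟩)

theorem sum_split (hd : 1 < d) (m : Multiset M) : (split d m).sum = m.sum := by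
  have hdigits (n : ℕ) (hn : n ≤ card m) :
      ∑ j ∈ Finset.range (card m), n / d ^ j % d * d ^ j = n := by
    rw [Nat.sum_range_div_pow_mod_mul_pow, Nat.mod_eq_of_lt (hn.trans_lt (Nat.lt_pow_self hd))]
  conv_rhs => rw [← toFinset_sum_count_nsmul_eq m]
  simp only [split, sum_sum, sum_nsmul, sum_singleton, smul_smul, ← Finset.sum_smul]
  exact Finset.sum_congr rfl fun x _ => by rw [hdigits _ (count_le_card x m)]

theorem count_split (hinj : InjOn (scale d) (univ ×ˢ T)) (hd : 1 < d) {m : Multiset M}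
    (hm : ∀ x ∈ m, x ∈ T) {μ : M} (hμ : μ ∈ T) (J : ℕ) :
    (split d m).count (d ^ J • μ) = m.count μ / d ^ J % d := by
  have hcond : ∀ x ∈ m.toFinset, ∀ j, d ^ J • μ = d ^ j • x ↔ μ = x ∧ J = j := fun x hx j =>
    (pow_smul_eq_pow_smul_iff hinj hμ (hm x (mem_toFinset.1 hx))).trans and_comm
  calc (split d m).count (d ^ J • μ)
      = ∑ x ∈ m.toFinset, ∑ j ∈ Finset.range (card m),
          if μ = x then if J = j then m.count x / d ^ j % d else 0 else 0 := by
        simp only [split, count_sum', count_nsmul, count_singleton]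
        exact Finset.sum_congr rfl fun x hx => Finset.sum_congr rfl fun j _ => by
          simp only [hcond x hx j, ite_and, mul_ite, mul_one, mul_zero]
    _ = if μ ∈ m then if J < card m then m.count μ / d ^ J % d else 0 else 0 := by
        simp [Finset.sum_ite_irrel, Finset.sum_ite_eq]
    _ = m.count μ / d ^ J % d := by
        split_ifs with hμm hJ
        · rfl
        · have hlt : m.count μ < d ^ J := (count_le_card μ m).trans_lt <|
            (Nat.lt_pow_self hd).trans_le (Nat.pow_le_pow_right (by omega) (not_lt.1 hJ))
          rw [Nat.div_eq_of_lt hlt, Nat.zero_mod]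
        · rw [count_eq_zero_of_notMem hμm, Nat.zero_div, Nat.zero_mod]

theorem count_split_lt (hinj : InjOn (scale d) (univ ×ˢ T)) (hd : 1 < d) {m : Multiset M}
    (hm : ∀ x ∈ m, x ∈ T) (y : M) : (split d m).count y < d := by
  by_cases hy : y ∈ split d m
  · obtain ⟨j, -, x, hx, rfl⟩ := exists_of_mem_split hy
    rw [count_split hinj hd hm (hm x hx)]
    exact Nat.mod_lt _ (by omega)
  · rw [count_eq_zero_of_notMem hy]
    omega

theorem merge_split (hbij : BijOn (scale d) (univ ×ˢ T) S) (hd : 1 < d) {m : Multiset M}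
    (hm : ∀ x ∈ m, x ∈ T) : merge d T (split d m) = m := by
  have hsplit (y : M) (hy : y ∈ split d m) : y ∈ S ∧ (factor d T y).1 < card m := by
    refine ⟨mem_of_mem_split hbij.mapsTo hm hy, ?_⟩
    obtain ⟨j, hj, x, hx, rfl⟩ := exists_of_mem_split hy
    rwa [factor_pow_smul hbij (hm x hx)]
  ext μ
  by_cases hμ : μ ∈ T
  · rw [count_merge hbij (fun y hy => (hsplit y hy).1) hμ (fun y hy => (hsplit y hy).2)]
    simp only [count_split hbij.injOn hd hm hμ]
    rw [Nat.sum_range_div_pow_mod_mul_pow,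
      Nat.mod_eq_of_lt ((count_le_card μ m).trans_lt (Nat.lt_pow_self hd))]
  · rw [count_eq_zero_of_notMem fun h => hμ (mem_merge hbij (fun y hy => (hsplit y hy).1) h),
      count_eq_zero_of_notMem fun h => hμ (hm μ h)]

theorem split_merge (hbij : BijOn (scale d) (univ ×ˢ T) S) (hd : 1 < d) {m : Multiset M}
    (hm : ∀ s ∈ m, s ∈ S) (hcount : ∀ s, m.count s < d) : split d (merge d T m) = m := by
  set N := m.toFinset.sup (fun s => (factor d T s).1) + 1
  have hN (s : M) (hs : s ∈ m) : (factor d T s).1 < N :=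
    Nat.lt_succ_of_le (Finset.le_sup (f := fun s => (factor d T s).1) (mem_toFinset.2 hs))
  have hmerge (y : M) (hy : y ∈ merge d T m) : y ∈ T := mem_merge hbij hm hy
  ext y
  by_cases hy : y ∈ S
  · obtain ⟨⟨J, μ⟩, ⟨-, hμ⟩, rfl⟩ := hbij.surjOn hy
    rw [scale, count_split hbij.injOn hd hmerge hμ, count_merge hbij hm hμ hN,
      Nat.sum_range_mul_pow_div_pow_mod fun j => hcount _]
    split_ifs with hJ
    · rfl
    · refine (count_eq_zero_of_notMem fun h => hJ ?_).symm
      simpa only [factor_pow_smul hbij hμ] using hN _ h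
  · rw [count_eq_zero_of_notMem fun h => hy (mem_of_mem_split hbij.mapsTo hmerge h),
      count_eq_zero_of_notMem fun h => hy (hm y h)]

theorem ncard_restricted_eq_ncard_countRestricted (hd : 1 < d)
    (hbij : BijOn (scale d) (univ ×ˢ T) S) (δ : M) :
    {m : Multiset M | (∀ x ∈ m, x ∈ T) ∧ m.sum = δ}.ncard =
      {m : Multiset M | (∀ x ∈ m, x ∈ S) ∧ (∀ x, m.count x ≤ d - 1) ∧ m.sum = δ}.ncard := by
  refine BijOn.ncard_eq (f := split d) (InvOn.bijOn (f' := merge d T) ⟨?_, ?_⟩ ?_ ?_)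
  · rintro m ⟨hm, -⟩
    exact merge_split hbij hd hm
  · rintro m ⟨hm, hcount, -⟩
    exact split_merge hbij hd hm fun s => by have := hcount s; omega
  · rintro m ⟨hm, hsum⟩
    refine ⟨fun y => mem_of_mem_split hbij.mapsTo hm, fun y => ?_, (sum_split hd m).trans hsum⟩
    have := count_split_lt hbij.injOn hd hm y
    omega
  · rintro m ⟨hm, -, hsum⟩
    exact ⟨fun y => mem_merge hbij hm, (sum_merge hbij hm).trans hsum⟩

end Glaisher

theorem eq_of_pow_mul_eq_pow_mul {R : Type*} [CommMonoidWithZero R] [IsCancelMulZero R]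
    {d x y : R} (hd : d ≠ 0) (hx : ¬d ∣ x) (hy : ¬d ∣ y) {i j : ℕ}
    (h : d ^ i * x = d ^ j * y) : i = j ∧ x = y := by
  wlog hij : i ≤ j generalizing i j x y
  · exact (this hy hx h.symm (le_of_not_ge hij)).imp Eq.symm Eq.symm
  obtain ⟨k, rfl⟩ := Nat.exists_eq_add_of_le hij
  have hxy : x = d ^ k * y := mul_left_cancel₀ (pow_ne_zero i hd) (by rw [h, pow_add, mul_assoc])
  cases k with
  | zero => simpa using hxy
  | succ k => exact absurd ⟨d ^ k * y, by rw [hxy, pow_succ', mul_assoc]⟩ hx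

theorem Ideal.mem_of_pow_mul_mem_mul_span_singleton {R : Type*} [CommRing R] [IsDomain R]
    {𝔞 : Ideal R} {d a : R} (hd : d ≠ 0) {n j : ℕ} (h : d ^ n * a ∈ 𝔞 * Ideal.span {d ^ j})
    (h' : d ^ n * a ∉ Ideal.span {d ^ (j + 1)}) : a ∈ 𝔞 := by
  obtain ⟨z, hz, hzd⟩ := Ideal.mem_mul_span_singleton.1 h
  rcases lt_or_ge j n with hjn | hnj
  · exact absurd (Ideal.mem_span_singleton.2 ((pow_dvd_pow d hjn).mul_right a)) h'
  · obtain ⟨k, rfl⟩ := Nat.exists_eq_add_of_le hnj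
    have ha : a = z * d ^ k := mul_left_cancel₀ (pow_ne_zero n hd) (by rw [← hzd]; ring)
    exact ha ▸ 𝔞.mul_mem_right _ hz

namespace IsTotallyPositive

variable {K : Type*} [Field K] [NumberField K] {x : 𝓞 K}

theorem nsmul {n : ℕ} (hn : 0 < n) (hx : IsTotallyPositive K x) :
    IsTotallyPositive K (n • x) := fun φ => by
  simpa [nsmul_eq_mul] using mul_pos (Nat.cast_pos.2 hn) (hx φ)

theorem of_nsmul {n : ℕ} (h : IsTotallyPositive K (n • x)) : IsTotallyPositive K x := fun φ =>
  pos_of_mul_pos_right (by simpa [nsmul_eq_mul] using h φ) (Nat.cast_nonneg n)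

theorem ne_zero [Nonempty (K →+* ℝ)] (hx : IsTotallyPositive K x) : x ≠ 0 := by
  rintro rfl
  obtain ⟨φ⟩ := ‹Nonempty (K →+* ℝ)›
  simpa using hx φ

end IsTotallyPositive

theorem NumberField.nonempty_ringHom_real_of_im_eq_zero {K : Type*} [Field K] [NumberField K]
    (hK : ∀ φ : K →+* ℂ, ∀ x : K, (φ x).im = 0) : Nonempty (K →+* ℝ) := by
  obtain ⟨ψ⟩ : Nonempty (K →+* ℂ) := inferInstance
  refine ⟨ComplexEmbedding.IsReal.embedding (φ := ψ) (ComplexEmbedding.isReal_iff.2 ?_)⟩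
  ext x
  exact Complex.conj_eq_iff_im.2 (hK ψ x)

theorem NumberField.RingOfIntegers.not_isUnit_natCast {K : Type*} [Field K] [NumberField K]
    {d : ℕ} (hd : 1 < d) : ¬IsUnit (d : 𝓞 K) := by
  rw [NumberField.isUnit_iff_norm]
  simp only [RingOfIntegers.coe_norm, map_natCast]
  rw [← map_natCast (algebraMap ℚ K), Algebra.norm_algebraMap, abs_pow, Nat.abs_cast]
  exact (one_lt_pow₀ (by exact_mod_cast hd) Module.finrank_pos.ne').ne'

theorem bijOn_scale_totallyPositive {K : Type*} [Field K] [NumberField K] [Nonempty (K →+* ℝ)]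
    {𝔞 : Ideal (𝓞 K)} {d : ℕ} (hd : 1 < d) (hda : (d : 𝓞 K) ∈ 𝔞) :
    Set.BijOn (Glaisher.scale d) (Set.univ ×ˢ {x | IsTotallyPositive K x ∧ x ∉ 𝔞})
      ({x | IsTotallyPositive K x} \ ⋃ j : ℕ, {x |
        x ∈ 𝔞 * Ideal.span {(d : 𝓞 K) ^ j} ∧ x ∉ Ideal.span {(d : 𝓞 K) ^ (j + 1)}}) := by
  have hd0 : (d : 𝓞 K) ≠ 0 := Nat.cast_ne_zero.2 (by omega)
  have hscale (p : ℕ × 𝓞 K) : Glaisher.scale d p = (d : 𝓞 K) ^ p.1 * p.2 := by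
    simp [Glaisher.scale, nsmul_eq_mul]
  have hndvd {x : 𝓞 K} (hx : x ∉ 𝔞) : ¬(d : 𝓞 K) ∣ x := fun h => hx (Ideal.mem_of_dvd _ h hda)
  refine ⟨?_, ?_, ?_⟩
  · rintro ⟨j, x⟩ ⟨-, hx, hx𝔞⟩
    refine ⟨hx.nsmul (pow_pos (by omega) j), ?_⟩
    simp only [Set.mem_iUnion, Set.mem_ofPred_eq, hscale, not_exists, not_and]
    exact fun i h h' => hx𝔞 (Ideal.mem_of_pow_mul_mem_mul_span_singleton hd0 h h')
  · rintro ⟨i, x⟩ ⟨-, -, hx⟩ ⟨j, y⟩ ⟨-, -, hy⟩ h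
    rw [hscale, hscale] at h
    exact Prod.ext_iff.2 (eq_of_pow_mul_eq_pow_mul hd0 (hndvd hx) (hndvd hy) h)
  · rintro s ⟨hs, hsU⟩
    obtain ⟨n, a, ha, rfl⟩ :=
      WfDvdMonoid.max_power_factor' hs.ne_zero (RingOfIntegers.not_isUnit_natCast hd)
    have ha' : IsTotallyPositive K a :=
      IsTotallyPositive.of_nsmul (n := d ^ n) (by simpa [nsmul_eq_mul] using hs)
    refine ⟨(n, a), ⟨trivial, ha', fun ha𝔞 => hsU (Set.mem_iUnion.2 ⟨n, ?_, ?_⟩)⟩, hscale _⟩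
    · exact Ideal.mul_mem_mul_rev ha𝔞 (Ideal.mem_span_singleton_self _)
    · rwa [Ideal.mem_span_singleton, pow_succ, mul_dvd_mul_iff_left (pow_ne_zero n hd0)]

theorem ideal_partition_theorem_general
    (K : Type*) [Field K] [NumberField K]
    (hTR : ∀ φ : K →+* ℂ, ∀ x : K, (φ x).im = 0)
    (𝔞 : Ideal (𝓞 K))
    (d : ℕ) (hd : 0 < d) (hda : (d : 𝓞 K) ∈ 𝔞)
    (S : Set (𝓞 K))
    (hS : S = {x : 𝓞 K | IsTotallyPositive K x} \
      ⋃ j : ℕ, {x : 𝓞 K |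
        x ∈ 𝔞 * Ideal.span {(d : 𝓞 K) ^ j} ∧ x ∉ Ideal.span {(d : 𝓞 K) ^ (j + 1)}})
    (δ : 𝓞 K) :
    {m : Multiset (𝓞 K) |
        (∀ x ∈ m, IsTotallyPositive K x ∧ x ∉ 𝔞) ∧ m.sum = δ}.ncard =
    {m : Multiset (𝓞 K) |
        (∀ x ∈ m, x ∈ S) ∧ (∀ x : 𝓞 K, m.count x ≤ d - 1) ∧ m.sum = δ}.ncard := by
  subst hS
  obtain rfl | hd1 : d = 1 ∨ 1 < d := by omega
  -- For `d = 1` the factorization fails (`𝔞 = 𝒪`), but both sides count only the empty partition.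
  · have h𝔞 : 𝔞 = ⊤ := (Ideal.eq_top_iff_one 𝔞).2 (by simpa using hda)
    congr 1
    ext m
    simp +contextual [h𝔞]
  · have := NumberField.nonempty_ringHom_real_of_im_eq_zero hTR
    exact Glaisher.ncard_restricted_eq_ncard_countRestricted hd1
      (bijOn_scale_totallyPositive hd1 hda) δ

/-- for a nonzero ideal `𝔞` of `𝓞 K` and a positive rational integer `d ∈ 𝔞`,
set `S = 𝒪⁺ \ ⋃_{j ≥ 0} (𝔞·(dʲ) \ (d^{j+1}))`.  Then the number of partitions of a totally
positive `δ` with parts in `𝒪⁺ \ 𝔞` equals the number of partitions of `δ` with parts in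
`S`, each part repeated at most `d − 1` times. -/
theorem ideal_partition_theorem
    (K : Type*) [Field K] [NumberField K]
    (hTR : ∀ φ : K →+* ℂ, ∀ x : K, (φ x).im = 0)
    (𝔞 : Ideal (𝓞 K)) (h𝔞 : 𝔞 ≠ ⊥)
    (d : ℕ) (hd : 0 < d) (hda : (d : 𝓞 K) ∈ 𝔞)
    (S : Set (𝓞 K))
    (hS : S = {x : 𝓞 K | IsTotallyPositive K x} \
      ⋃ j : ℕ, {x : 𝓞 K |
        x ∈ 𝔞 * Ideal.span {(d : 𝓞 K) ^ j} ∧ x ∉ Ideal.span {(d : 𝓞 K) ^ (j + 1)}})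
    (δ : 𝓞 K) (hδ : IsTotallyPositive K δ) :
    {m : Multiset (𝓞 K) |
        (∀ x ∈ m, IsTotallyPositive K x ∧ x ∉ 𝔞) ∧ m.sum = δ}.ncard =
    {m : Multiset (𝓞 K) |
        (∀ x ∈ m, x ∈ S) ∧ (∀ x : 𝓞 K, m.count x ≤ d - 1) ∧ m.sum = δ}.ncard :=
  ideal_partition_theorem_general K hTR 𝔞 d hd hda S hS δ
end

section
/- Let K be a totally real number field and 𝒪⁺ its totally positive integers; write α ⪰ 0 if α is totally positive or zero. For every δ ∈ 𝒪⁺ and every positive integer m, the number of chain partitions of δ with at most m parts equals the number of solutions (x_1, …, x_m) to δ = x_1 + 2x_2 + ⋯ + m x_m with each x_i ⪰ 0. -/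
open NumberField

/-- `x ⪰ 0`: `x` is totally positive or zero. -/
def Succeq (K : Type*) [Field K] [NumberField K] (x : 𝓞 K) : Prop :=
  x = 0 ∨ IsTotallyPositive K x

/-!
A solution `x` of `δ = x₁ + 2x₂ + ⋯ + m xₘ` with all `xᵢ ⪰ 0` is sent to its tail sums
`νⱼ = xⱼ + ⋯ + xₘ`: they satisfy `0 ⪯ νₘ ⪯ ⋯ ⪯ ν₁` and `ν₁ + ⋯ + νₘ = δ`, and `x` is recovered
from their consecutive differences. In such a sequence the zeros come first; dropping them
leaves a chain partition of `δ` with at most `m` parts, and padding a chain partition with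
zeros on the left inverts this. All that is used is that `b - a ⪰ 0` is a partial order on
`𝓞 K` compatible with addition (antisymmetry needs a real embedding of `K`), so the
bijection exists in any partially ordered abelian group.
-/

namespace Fin

theorem monotone_partialSum_iff {M : Type*} [AddCommMonoid M] [PartialOrder M]
    [IsOrderedCancelAddMonoid M] {n : ℕ} {y : Fin n → M} :
    Monotone (partialSum y) ↔ ∀ i, 0 ≤ y i := by
  simp only [monotone_iff_le_succ, partialSum_succ, le_add_iff_nonneg_right]

theorem sum_partialSum_comp_rev {M : Type*} [AddCommMonoid M] {n : ℕ} (x : Fin n → M) :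
    ∑ j, partialSum (x ∘ rev) j = ∑ i : Fin n, ((i : ℕ) + 1) • x i := by
  induction n with
  | zero => simp
  | succ n ih =>
    have htail : tail (x ∘ rev) = init x ∘ rev := by
      funext k
      simp [tail, init, rev_succ]
    rw [sum_univ_succ, partialSum_zero, zero_add]
    simp only [partialSum_succ', htail, Finset.sum_add_distrib, ih]
    rw [sum_univ_castSucc (fun i : Fin (n + 1) => ((i : ℕ) + 1) • x i)]
    simp [init, add_comm]

end Fin

namespace List

variable {α : Type*} [DecidableEq α]

theorem dropWhile_replicate_append {a : α} {l : List α} (h : ∀ b ∈ l.head?, b ≠ a) (k : ℕ) :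
    (replicate k a ++ l).dropWhile (· = a) = l := by
  rw [dropWhile_append_of_pos (by simp +contextual [mem_replicate])]
  cases l with
  | nil => rfl
  | cons b l => simpa using h

theorem replicate_append_dropWhile (a : α) (L : List α) :
    replicate (L.length - (L.dropWhile (· = a)).length) a ++ L.dropWhile (· = a) = L := by
  have htake : L.takeWhile (· = a) = replicate (L.takeWhile (· = a)).length a :=
    eq_replicate_iff.mpr ⟨rfl, fun b hb => by simpa using mem_takeWhile_imp hb⟩
  have hlen := congrArg length (takeWhile_append_dropWhile (p := (· = a)) (l := L))
  rw [length_append] at hlen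
  conv_rhs => rw [← takeWhile_append_dropWhile (p := (· = a)) (l := L), htake]
  congr 2
  omega

theorem Pairwise.pos_of_mem_dropWhile_eq_zero [Zero α] [PartialOrder α] {L : List α}
    (hL : L.Pairwise (· ≤ ·)) (h0 : ∀ a ∈ L, 0 ≤ a) {a : α} (ha : a ∈ L.dropWhile (· = 0)) :
    0 < a := by
  obtain ⟨b, D, hD⟩ := exists_cons_of_ne_nil (ne_nil_of_mem ha)
  have hb : b ≠ 0 := by
    simpa [hD] using head_dropWhile_not (· = 0) (l := L) (by simp [hD])
  have hbL : b ∈ L := (dropWhile_suffix _).subset (hD ▸ mem_cons_self)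
  have hsorted : (b :: D).Pairwise (· ≤ ·) := hD ▸ hL.sublist (dropWhile_suffix _).sublist
  have hba : b ≤ a := by
    rcases mem_cons.mp (hD ▸ ha) with rfl | ha
    · exact le_rfl
    · exact rel_of_pairwise_cons hsorted ha
  exact (lt_of_le_of_ne (h0 b hbL) hb.symm).trans_le hba

end List

section ChainPartitions

variable {G : Type*} [AddCommMonoid G] [PartialOrder G]

def weightedSolutions (m : ℕ) (δ : G) : Set (Fin m → G) :=
  {x | (∀ i, 0 ≤ x i) ∧ ∑ i : Fin m, ((i : ℕ) + 1) • x i = δ}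

def chainPartitions (m : ℕ) (δ : G) : Set (List G) :=
  {l | l.length ≤ m ∧ (∀ a ∈ l, 0 < a) ∧ l.IsChain (· ≤ ·) ∧ l.sum = δ}

/-- The leading `0` makes the consecutive differences of a padded chain an `m`-tuple. -/
def paddedChains (m : ℕ) (δ : G) : Set (Fin (m + 1) → G) :=
  {h | h 0 = 0 ∧ Monotone h ∧ ∑ j, h j = δ}

def paddedChainLists (m : ℕ) (δ : G) : Set (List G) :=
  {L | L.length = m + 1 ∧ L.head? = some 0 ∧ L.Pairwise (· ≤ ·) ∧ L.sum = δ}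

theorem ofFn_mem_paddedChainLists_iff {m : ℕ} {δ : G} {h : Fin (m + 1) → G} :
    List.ofFn h ∈ paddedChainLists m δ ↔ h ∈ paddedChains m δ := by
  simp [paddedChainLists, paddedChains, List.head?_eq_getElem?, List.pairwise_ofFn,
    monotone_iff_forall_lt, List.sum_ofFn, -List.ofFn_succ]

theorem bijOn_ofFn_paddedChains (m : ℕ) (δ : G) :
    Set.BijOn List.ofFn (paddedChains m δ) (paddedChainLists m δ) := by
  refine ⟨fun h hh => ofFn_mem_paddedChainLists_iff.mpr hh, List.ofFn_injective.injOn, ?_⟩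
  intro L hL
  obtain ⟨hlen, -⟩ := id hL
  obtain ⟨h, rfl⟩ : ∃ h : Fin (m + 1) → G, List.ofFn h = L :=
    ⟨fun i => L[i.cast hlen.symm],
      List.ext_getElem (by simp [hlen]) fun _ _ _ => List.getElem_ofFn _⟩
  exact ⟨h, ofFn_mem_paddedChainLists_iff.mp hL, rfl⟩

theorem dropWhile_mem_chainPartitions [DecidableEq G] {m : ℕ} {δ : G} {L : List G}
    (hL : L ∈ paddedChainLists m δ) : L.dropWhile (· = 0) ∈ chainPartitions m δ := by
  obtain ⟨hlen, hhead, hsorted, hsum⟩ := hL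
  obtain ⟨L, rfl⟩ : ∃ L', L = 0 :: L' := List.head?_eq_some_iff.mp hhead
  have hnonneg : ∀ a ∈ 0 :: L, 0 ≤ a :=
    List.forall_mem_cons.mpr ⟨le_rfl, (List.pairwise_cons.mp hsorted).1⟩
  refine ⟨?_, fun a ha => hsorted.pos_of_mem_dropWhile_eq_zero hnonneg ha, ?_, ?_⟩
  · have := List.length_dropWhile_le (· = 0) L
    simp only [List.length_cons, add_left_inj] at hlen
    simpa [hlen] using this
  · exact List.isChain_iff_pairwise.mpr (hsorted.sublist (List.dropWhile_suffix _).sublist)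
  · simpa [hsum] using congrArg List.sum (List.replicate_append_dropWhile 0 (0 :: L))

theorem replicate_append_mem_paddedChainLists {m : ℕ} {δ : G} {l : List G}
    (hl : l ∈ chainPartitions m δ) :
    List.replicate (m + 1 - l.length) 0 ++ l ∈ paddedChainLists m δ := by
  obtain ⟨hlen, hpos, hchain, rfl⟩ := hl
  obtain ⟨k, hk⟩ : ∃ k, m + 1 - l.length = k + 1 := ⟨m - l.length, by omega⟩
  refine ⟨by rw [List.length_append, List.length_replicate]; omega,
    by simp [hk, List.replicate_succ], ?_, by simp⟩
  refine List.pairwise_append.mpr ⟨List.pairwise_replicate.mpr (Or.inr le_rfl),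
    List.isChain_iff_pairwise.mp hchain, ?_⟩
  simp only [List.mem_replicate]
  rintro _ ⟨-, rfl⟩ b hb
  exact (hpos b hb).le

theorem bijOn_dropWhile_paddedChainLists [DecidableEq G] (m : ℕ) (δ : G) :
    Set.BijOn (List.dropWhile (· = 0)) (paddedChainLists m δ) (chainPartitions m δ) := by
  refine Set.InvOn.bijOn (f' := fun l => List.replicate (m + 1 - l.length) 0 ++ l)
    ⟨fun L hL => ?_, fun l hl => ?_⟩ (fun _ => dropWhile_mem_chainPartitions)
    (fun _ => replicate_append_mem_paddedChainLists)
  · simpa [hL.1] using List.replicate_append_dropWhile 0 L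
  · exact List.dropWhile_replicate_append
      (fun b hb => (hl.2.1 b (List.mem_of_mem_head? hb)).ne') _

end ChainPartitions

section OrderedAddCommGroup

variable {G : Type*} [AddCommGroup G] [PartialOrder G] [IsOrderedAddMonoid G]

theorem bijOn_partialSum_weightedSolutions (m : ℕ) (δ : G) :
    Set.BijOn (fun x => Fin.partialSum (x ∘ Fin.rev)) (weightedSolutions m δ)
      (paddedChains m δ) := by
  have hinv : Set.InvOn (fun h i => h (Fin.rev i).succ - h (Fin.rev i).castSucc)
      (fun x => Fin.partialSum (x ∘ Fin.rev)) (weightedSolutions m δ) (paddedChains m δ) := by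
    refine ⟨fun x _ => ?_, fun h ⟨h0, _⟩ => ?_⟩
    · funext i
      simp [Fin.partialSum_succ]
    · simpa [h0, Function.comp_def, neg_add_eq_sub] using Fin.partialSum_left_neg h
  refine hinv.bijOn ?_ ?_
  · rintro x ⟨hx, rfl⟩
    exact ⟨Fin.partialSum_zero _, Fin.monotone_partialSum_iff.mpr fun i => hx _,
      Fin.sum_partialSum_comp_rev x⟩
  · rintro h hh
    refine ⟨fun i => sub_nonneg.mpr (hh.2.1 Fin.castSucc_lt_succ.le), ?_⟩
    rw [← Fin.sum_partialSum_comp_rev]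
    exact (congrArg (fun g => ∑ j, g j) (hinv.2 hh)).trans hh.2.2

theorem ncard_chainPartitions_eq_ncard_weightedSolutions (m : ℕ) (δ : G) :
    (chainPartitions m δ).ncard = (weightedSolutions m δ).ncard := by
  classical
  rw [← (bijOn_dropWhile_paddedChainLists m δ).ncard_eq,
    ← (bijOn_ofFn_paddedChains m δ).ncard_eq, (bijOn_partialSum_weightedSolutions m δ).ncard_eq]

end OrderedAddCommGroup

section TotallyPositive

variable {K : Type*} [Field K] [NumberField K]

theorem nonempty_ringHom_real_of_forall_im_eq_zero
    (hTR : ∀ φ : K →+* ℂ, ∀ x : K, (φ x).im = 0) : Nonempty (K →+* ℝ) :=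
  let φ : K →+* ℂ := Classical.arbitrary _
  ⟨ComplexEmbedding.IsReal.embedding (φ := φ)
    (RingHom.ext fun x => Complex.conj_eq_iff_im.mpr (hTR φ x))⟩

theorem IsTotallyPositive.ne_zero_s11 [Nonempty (K →+* ℝ)] {x : 𝓞 K}
    (hx : IsTotallyPositive K x) : x ≠ 0 := by
  rintro rfl
  simpa using hx (Classical.arbitrary _)

theorem Succeq.add {x y : 𝓞 K} (hx : Succeq K x) (hy : Succeq K y) : Succeq K (x + y) := by
  rcases hx with rfl | hx
  · exact (zero_add y).symm ▸ hy
  rcases hy with rfl | hy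
  · exact (add_zero x).symm ▸ Or.inr hx
  exact Or.inr fun φ => by simpa using add_pos (hx φ) (hy φ)

variable (K) in
def succeqCone [Nonempty (K →+* ℝ)] : AddGroupCone (𝓞 K) where
  carrier := {x | Succeq K x}
  zero_mem' := Or.inl rfl
  add_mem' := Succeq.add
  eq_zero_of_mem_of_neg_mem' {x} hx hnx := by
    rcases hx with rfl | hx
    · rfl
    rcases hnx with hnx | hnx
    · exact neg_eq_zero.mp hnx
    obtain ⟨φ⟩ := ‹Nonempty (K →+* ℝ)›
    have hneg := hnx φ
    push_cast at hneg
    linarith [hx φ, map_neg φ (x : K)]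

variable (K) in
abbrev succeqOrder [Nonempty (K →+* ℝ)] : PartialOrder (𝓞 K) :=
  .mkOfAddGroupCone (succeqCone K)

variable [Nonempty (K →+* ℝ)]

attribute [local instance] succeqOrder

theorem isOrderedAddMonoid_succeqOrder : IsOrderedAddMonoid (𝓞 K) :=
  IsOrderedAddMonoid.mkOfCone (succeqCone K)

theorem zero_le_iff_succeq {x : 𝓞 K} : 0 ≤ x ↔ Succeq K x := by
  show Succeq K (x - 0) ↔ _
  rw [sub_zero]

theorem zero_lt_iff_isTotallyPositive {x : 𝓞 K} : 0 < x ↔ IsTotallyPositive K x := by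
  rw [lt_iff_le_and_ne, zero_le_iff_succeq, Succeq]
  exact ⟨fun ⟨h, hne⟩ => h.resolve_left hne.symm, fun h => ⟨Or.inr h, h.ne_zero_s11.symm⟩⟩

end TotallyPositive

theorem chain_partitions_eq_weighted_solutions_general
    (K : Type*) [Field K] [NumberField K]
    (hTR : ∀ φ : K →+* ℂ, ∀ x : K, (φ x).im = 0)
    (δ : 𝓞 K) (m : ℕ) :
    {l : List (𝓞 K) | l.length ≤ m ∧ (∀ x ∈ l, IsTotallyPositive K x) ∧
        l.Chain' (fun a b => Succeq K (b - a)) ∧ l.sum = δ}.ncard =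
    {x : Fin m → 𝓞 K | (∀ i, Succeq K (x i)) ∧
        ∑ i : Fin m, ((i : ℕ) + 1) • x i = δ}.ncard := by
  have := nonempty_ringHom_real_of_forall_im_eq_zero hTR
  let := succeqOrder K
  have := isOrderedAddMonoid_succeqOrder (K := K)
  have h := ncard_chainPartitions_eq_ncard_weightedSolutions m δ
  simp only [chainPartitions, weightedSolutions, zero_lt_iff_isTotallyPositive,
    zero_le_iff_succeq] at h
  exact h

/-- the number of chain partitions of a totally positive `δ` with at most
`m` parts (recorded as weakly increasing lists: consecutive differences are `⪰ 0`) equals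
the number of solutions `(x₁, …, x_m)`, `xᵢ ⪰ 0`, of `δ = x₁ + 2x₂ + ⋯ + m·x_m`. -/
theorem chain_partitions_eq_weighted_solutions
    (K : Type*) [Field K] [NumberField K]
    (hTR : ∀ φ : K →+* ℂ, ∀ x : K, (φ x).im = 0)
    (δ : 𝓞 K) (hδ : IsTotallyPositive K δ) (m : ℕ) (hm : 0 < m) :
    {l : List (𝓞 K) | l.length ≤ m ∧ (∀ x ∈ l, IsTotallyPositive K x) ∧
        l.Chain' (fun a b => Succeq K (b - a)) ∧ l.sum = δ}.ncard =
    {x : Fin m → 𝓞 K | (∀ i, Succeq K (x i)) ∧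
        ∑ i : Fin m, ((i : ℕ) + 1) • x i = δ}.ncard :=
  chain_partitions_eq_weighted_solutions_general K hTR δ m
end
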